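/- arXiv:1612.06845 — 2 statements merged into one kernel-verified Lean document; each statement's English description precedes it below -/
import Mathlib

section
/- Let n ≥ 1 and let a_1, …, a_n be positive integers with a_1 > 1. If n is odd, then F_n = N[𝓛_1, …, 𝓛_n]; if n is even, then F_n = C_n^{−1} · N[𝓛_1, …, 𝓛_n]. -/
open MvPolynomial Finset

/-- The ambient field `K = ℚ(y_1, y_2, …)` (only `y_1,…,y_d` are used). -/
abbrev Kf : Type := FractionRing (MvPolynomial ℕ ℚ)

/-- The variable `y_j`, viewed in the fraction field. -/
noncomputable def y (j : ℕ) : Kf := algebraMap (MvPolynomial ℕ ℚ) Kf (X j)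

/-- Partial sums `ℓ_i = a_1 + ⋯ + a_i`, with `ℓ_0 = 0`. -/
def ell (a : ℕ → ℕ) (i : ℕ) : ℕ := ∑ s ∈ Finset.Icc 1 i, a s

/-- `φ_i`. -/
noncomputable def phi (a : ℕ → ℕ) (i : ℕ) : Kf :=
  if Odd i then
    ∑ k ∈ Finset.Icc (ell a (i-1)) (ell a i - 1), ∏ j ∈ Finset.Icc (ell a (i-1) + 1) k, y j
  else
    ∑ k ∈ Finset.Icc (ell a (i-1) + 1) (ell a i), ∏ j ∈ Finset.Icc k (ell a i - 1), y j

/-- `C_i`. -/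
noncomputable def Cc (a : ℕ → ℕ) (i : ℕ) : Kf :=
  if Odd i then ∏ j ∈ Finset.Icc 1 (ell a (i-1)), y j
  else ∏ j ∈ Finset.Icc 1 (ell a i - 1), (y j)⁻¹

/-- `𝓛_i = φ_i C_i`. -/
noncomputable def Lr (a : ℕ → ℕ) (i : ℕ) : Kf := phi a i * Cc a i

/-- The continuant `N[b_1,…,b_m]`. -/
def contN {R : Type*} [CommSemiring R] (b : ℕ → R) : ℕ → R
  | 0 => 1
  | 1 => b 1
  | (m+2) => b (m+2) * contN b (m+1) + contN b m

/-- The F-polynomials `F_m = F(𝒢[a_1,…,a_m])`. -/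
noncomputable def F (a : ℕ → ℕ) : ℕ → Kf
  | 0 => 1
  | 1 => phi a 1
  | 2 => phi a 1 * phi a 2 + ∏ j ∈ Finset.Icc 1 (ell a 2 - 1), y j
  | (m+3) =>
    if Odd (m+3) then
      y (ell a (m+2)) * phi a (m+3) * F a (m+2) + F a (m+1)
    else
      phi a (m+3) * F a (m+2) + (∏ j ∈ Finset.Icc (ell a (m+1)) (ell a (m+3) - 1), y j) * F a (m+1)

/-!
Put `N_m = N[𝓛_1, …, 𝓛_m]`. For even `i > 0` one has `C_{i+1} C_i = y_{ℓ_i}` and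
`C_{i+2} ∏_{j=ℓ_i}^{ℓ_{i+2}-1} y_j = C_i`; these turn the continuant recursion
`N_m = 𝓛_m N_{m-1} + N_{m-2}` into the recursion defining `F_m`, so by induction `N_m = F_m` for odd `m`
and `N_m = C_m F_m` for even `m`.
-/

section PrefixProducts

variable {G : Type*} [CommGroupWithZero G] {g : ℕ → G}

lemma prod_Icc_one_succ_mul_inv_prod_Icc_one (hg : ∀ j, g j ≠ 0) (L : ℕ) :
    (∏ j ∈ Icc 1 (L + 1), g j) * (∏ j ∈ Icc 1 L, g j)⁻¹ = g (L + 1) := by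
  rw [prod_Icc_succ_top (by omega), mul_right_comm,
    mul_inv_cancel₀ (prod_ne_zero_iff.mpr fun j _ => hg j), one_mul]

lemma inv_prod_Icc_one_mul_prod_Icc_succ (hg : ∀ j, g j ≠ 0) {m n : ℕ} (hmn : m ≤ n) :
    (∏ j ∈ Icc 1 n, g j)⁻¹ * ∏ j ∈ Icc (m + 1) n, g j = (∏ j ∈ Icc 1 m, g j)⁻¹ := by
  change (∏ j ∈ Icc (0 + 1) n, g j)⁻¹ * _ = (∏ j ∈ Icc (0 + 1) m, g j)⁻¹
  simp only [Icc_add_one_left_eq_Ioc]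
  rw [← prod_Ioc_consecutive g (Nat.zero_le m) hmn, mul_inv, inv_mul_cancel_right₀
    (prod_ne_zero_iff.mpr fun j _ => hg j)]

end PrefixProducts

lemma y_ne_zero (j : ℕ) : y j ≠ 0 :=
  (map_ne_zero_iff _ (IsFractionRing.injective _ _)).mpr (X_ne_zero j)

section Snake

variable {a : ℕ → ℕ}

lemma ell_mono : Monotone (ell a) := fun _ _ h =>
  sum_le_sum_of_subset (Icc_subset_Icc_right h)

lemma one_le_ell (ha : 0 < a 1) {i : ℕ} (hi : 1 ≤ i) : 1 ≤ ell a i :=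
  ha.trans_le (single_le_sum (fun _ _ => Nat.zero_le _) (by simp [hi]))

lemma Cc_of_even {i : ℕ} (hi : Even i) : Cc a i = (∏ j ∈ Icc 1 (ell a i - 1), y j)⁻¹ := by
  rw [Cc, if_neg (Nat.not_odd_iff_even.mpr hi), prod_inv_distrib]

lemma Cc_succ_mul_Cc (ha : 0 < a 1) {i : ℕ} (hi : Even i) (hi0 : 0 < i) :
    Cc a (i + 1) * Cc a i = y (ell a i) := by
  obtain ⟨L, hL⟩ : ∃ L, ell a i = L + 1 := ⟨ell a i - 1, by have := one_le_ell ha hi0; omega⟩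
  rw [Cc_of_even hi, Cc, if_pos hi.add_one, Nat.add_sub_cancel, hL, Nat.add_sub_cancel]
  exact prod_Icc_one_succ_mul_inv_prod_Icc_one y_ne_zero L

lemma Cc_add_two_mul_prod (ha : 0 < a 1) {i : ℕ} (hi : Even i) (hi0 : 0 < i) :
    Cc a (i + 2) * ∏ j ∈ Icc (ell a i) (ell a (i + 2) - 1), y j = Cc a i := by
  have h1 := one_le_ell ha hi0
  have hmono := ell_mono (a := a) (show i ≤ i + 2 by omega)
  rw [Cc_of_even hi, Cc_of_even (hi.add even_two), ← inv_prod_Icc_one_mul_prod_Icc_succ y_ne_zero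
    (show ell a i - 1 ≤ ell a (i + 2) - 1 by omega), Nat.sub_add_cancel h1]

lemma Cc_mul_prod_Icc_one {i : ℕ} (hi : Even i) :
    Cc a i * ∏ j ∈ Icc 1 (ell a i - 1), y j = 1 := by
  rw [Cc_of_even hi, inv_mul_cancel₀ (prod_ne_zero_iff.mpr fun j _ => y_ne_zero j)]

lemma Cc_ne_zero {i : ℕ} (hi : Even i) : Cc a i ≠ 0 :=
  left_ne_zero_of_mul_eq_one (Cc_mul_prod_Icc_one hi)

theorem contN_Lr_eq (ha : 0 < a 1) :
    ∀ m, contN (Lr a) m = if Odd m then F a m else Cc a m * F a m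
  | 0 => by simp [contN, F, Cc, ell]
  | 1 => by simp [contN, F, Lr, Cc, ell]
  | 2 => by
    have hC1 : Cc a 1 = 1 := by simp [Cc, ell]
    show Lr a 2 * Lr a 1 + 1 = if Odd 2 then _ else Cc a 2 * F a 2
    rw [if_neg (by decide), F, Lr, Lr, hC1, mul_one]
    linear_combination (-1 : Kf) * Cc_mul_prod_Icc_one (a := a) even_two
  | m + 3 => by
    have hN : contN (Lr a) (m + 3) = Lr a (m + 3) * contN (Lr a) (m + 2) + contN (Lr a) (m + 1) :=
      rfl
    rw [hN, contN_Lr_eq ha (m + 1), contN_Lr_eq ha (m + 2), F, Lr]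
    rcases Nat.even_or_odd m with hm | hm
    · have h1 : Odd (m + 1) := by simpa [parity_simps] using hm
      have h2 : Even (m + 2) := by simpa [parity_simps] using hm
      have h3 : Odd (m + 3) := by simpa [parity_simps] using hm
      rw [if_pos h1, if_neg (Nat.not_odd_iff_even.mpr h2), if_pos h3, if_pos h3,
        ← Cc_succ_mul_Cc ha h2 (by omega)]
      ring
    · have h1 : Even (m + 1) := by simpa [parity_simps] using hm
      have h2 : Odd (m + 2) := by simpa [parity_simps] using hm
      have h3 : Even (m + 3) := by simpa [parity_simps] using hm
      rw [if_neg (Nat.not_odd_iff_even.mpr h1), if_pos h2, if_neg (Nat.not_odd_iff_even.mpr h3),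
        if_neg (Nat.not_odd_iff_even.mpr h3), ← Cc_add_two_mul_prod ha h1 (by omega)]
      ring

end Snake

theorem F_polynomial_continued_fraction_formula_general
    (n : ℕ) (a : ℕ → ℕ) (ha1 : 1 < a 1) :
    (Odd n → F a n = contN (Lr a) n) ∧
    (Even n → F a n = (Cc a n)⁻¹ * contN (Lr a) n) := by
  have h := contN_Lr_eq (a := a) (by omega) n
  refine ⟨fun hn => by rw [h, if_pos hn], fun hn => ?_⟩
  rw [h, if_neg (Nat.not_odd_iff_even.mpr hn), inv_mul_cancel_left₀ (Cc_ne_zero hn)]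

/-- **Main theorem** (Rabideau): for `n ≥ 1` and positive integers `a_1,…,a_n` with `a_1 > 1`,
if `n` is odd then `F_n = N[𝓛_1,…,𝓛_n]`, and if `n` is even then
`F_n = C_n⁻¹ ⬝ N[𝓛_1,…,𝓛_n]`. -/
theorem F_polynomial_continued_fraction_formula
    (n : ℕ) (hn : 1 ≤ n) (a : ℕ → ℕ)
    (hpos : ∀ i, 1 ≤ i → i ≤ n → 0 < a i) (ha1 : 1 < a 1) :
    (Odd n → F a n = contN (Lr a) n) ∧
    (Even n → F a n = (Cc a n)⁻¹ * contN (Lr a) n) :=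
  F_polynomial_continued_fraction_formula_general n a ha1
end

section
/- Let n ≥ 1 and let a_1, …, a_n be positive integers with a_1 > 1. Then each F_m (1 ≤ m ≤ n) lies in the subring ℚ[y_1, …, y_d] of K, and evaluating F_n at y_1 = ⋯ = y_d = 1 yields the positive integer N[a_1, …, a_n]. In particular, the sum of the coefficients of the F-polynomial F_n equals the continuant N[a_1, …, a_n]. -/
open MvPolynomial Finset

/-- polynomial lift of `phi`. -/
noncomputable def PhiP (a : ℕ → ℕ) (i : ℕ) : MvPolynomial ℕ ℚ :=
  if Odd i then
    ∑ k ∈ Finset.Icc (ell a (i-1)) (ell a i - 1), ∏ j ∈ Finset.Icc (ell a (i-1) + 1) k, X j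
  else
    ∑ k ∈ Finset.Icc (ell a (i-1) + 1) (ell a i), ∏ j ∈ Finset.Icc k (ell a i - 1), X j

/-- polynomial lift of `F`. -/
noncomputable def Pp (a : ℕ → ℕ) : ℕ → MvPolynomial ℕ ℚ
  | 0 => 1
  | 1 => PhiP a 1
  | 2 => PhiP a 1 * PhiP a 2 + ∏ j ∈ Finset.Icc 1 (ell a 2 - 1), X j
  | (m+3) =>
    if Odd (m+3) then
      X (ell a (m+2)) * PhiP a (m+3) * Pp a (m+2) + Pp a (m+1)
    else
      PhiP a (m+3) * Pp a (m+2) + (∏ j ∈ Finset.Icc (ell a (m+1)) (ell a (m+3) - 1), X j) * Pp a (m+1)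

lemma map_PhiP (a : ℕ → ℕ) (i : ℕ) :
    algebraMap (MvPolynomial ℕ ℚ) Kf (PhiP a i) = phi a i := by
  unfold PhiP phi y
  split <;> simp [map_sum, map_prod]

lemma map_Pp (a : ℕ → ℕ) : ∀ m, algebraMap (MvPolynomial ℕ ℚ) Kf (Pp a m) = F a m
  | 0 => by simp [Pp, F]
  | 1 => by simp [Pp, F, map_PhiP]
  | 2 => by simp [Pp, F, map_PhiP, map_prod, y]
  | (m+3) => by
    have h1 := map_Pp a (m+1)
    have h2 := map_Pp a (m+2)
    show algebraMap (MvPolynomial ℕ ℚ) Kf (Pp a (m+3)) = F a (m+3)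
    rw [show Pp a (m+3) = if Odd (m+3) then
        X (ell a (m+2)) * PhiP a (m+3) * Pp a (m+2) + Pp a (m+1)
      else
        PhiP a (m+3) * Pp a (m+2) + (∏ j ∈ Finset.Icc (ell a (m+1)) (ell a (m+3) - 1), X j) * Pp a (m+1) from rfl,
      show F a (m+3) = if Odd (m+3) then
        y (ell a (m+2)) * phi a (m+3) * F a (m+2) + F a (m+1)
      else
        phi a (m+3) * F a (m+2) + (∏ j ∈ Finset.Icc (ell a (m+1)) (ell a (m+3) - 1), y j) * F a (m+1) from rfl]
    split <;> simp [map_PhiP, h1, h2, y, map_prod]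

lemma ell_succ (a : ℕ → ℕ) (i : ℕ) (hi : 1 ≤ i) : ell a i = ell a (i-1) + a i := by
  obtain ⟨j, rfl⟩ : ∃ j, i = j + 1 := ⟨i - 1, by omega⟩
  simp [ell, Finset.sum_Icc_succ_top (by omega : 1 ≤ j + 1)]

lemma eval_PhiP (a : ℕ → ℕ) (i : ℕ) (hi : 1 ≤ i) (hai : 1 ≤ a i) :
    MvPolynomial.eval (fun _ => (1 : ℚ)) (PhiP a i) = (a i : ℚ) := by
  have h := ell_succ a i hi
  unfold PhiP
  split
  · have hc : (Finset.Icc (ell a (i-1)) (ell a i - 1)).card = a i := by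
      rw [Nat.card_Icc]; omega
    rw [map_sum]
    simp only [map_prod, eval_X, Finset.prod_const_one]
    rw [Finset.sum_const, hc, nsmul_eq_mul, mul_one]
  · have hc : (Finset.Icc (ell a (i-1) + 1) (ell a i)).card = a i := by
      rw [Nat.card_Icc]; omega
    rw [map_sum]
    simp only [map_prod, eval_X, Finset.prod_const_one]
    rw [Finset.sum_const, hc, nsmul_eq_mul, mul_one]

lemma contN_pos (a : ℕ → ℕ) (n : ℕ) (hpos : ∀ i, 1 ≤ i → i ≤ n → 0 < a i) :
    ∀ m, m ≤ n → 0 < contN a m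
  | 0, _ => Nat.one_pos
  | 1, h => hpos 1 le_rfl h
  | (m+2), h => by
    have := contN_pos a n hpos m (by omega)
    show 0 < a (m+2) * contN a (m+1) + contN a m
    omega

lemma eval_Pp (a : ℕ → ℕ) (n : ℕ) (hpos : ∀ i, 1 ≤ i → i ≤ n → 0 < a i) :
    ∀ m, m ≤ n → MvPolynomial.eval (fun _ => (1 : ℚ)) (Pp a m) = ((contN a m : ℕ) : ℚ)
  | 0, _ => by simp [Pp, contN]
  | 1, h => by
    rw [show Pp a 1 = PhiP a 1 from rfl, eval_PhiP a 1 le_rfl (hpos 1 le_rfl h)]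
    simp [contN]
  | 2, h => by
    rw [show Pp a 2 = PhiP a 1 * PhiP a 2 + ∏ j ∈ Finset.Icc 1 (ell a 2 - 1), X j from rfl]
    rw [map_add, map_mul, eval_PhiP a 1 le_rfl (hpos 1 le_rfl (by omega)),
      eval_PhiP a 2 (by omega) (hpos 2 (by omega) h)]
    simp only [map_prod, eval_X, Finset.prod_const_one]
    show _ = ((a 2 * (a 1) + 1 : ℕ) : ℚ)
    push_cast
    ring
  | (m+3), h => by
    have h1 := eval_Pp a n hpos (m+1) (by omega)
    have h2 := eval_Pp a n hpos (m+2) (by omega)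
    rw [show Pp a (m+3) = if Odd (m+3) then
        X (ell a (m+2)) * PhiP a (m+3) * Pp a (m+2) + Pp a (m+1)
      else
        PhiP a (m+3) * Pp a (m+2) + (∏ j ∈ Finset.Icc (ell a (m+1)) (ell a (m+3) - 1), X j) * Pp a (m+1) from rfl]
    have hphi := eval_PhiP a (m+3) (by omega) (hpos (m+3) (by omega) h)
    have hcont : contN a (m+3) = a (m+3) * contN a (m+2) + contN a (m+1) := rfl
    split <;>
      simp only [map_add, map_mul, eval_X, map_prod, Finset.prod_const_one, hphi, h1, h2,
        hcont] <;> push_cast <;> ring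

/-- Each `F_m` is a polynomial in `y_1,…,y_d`, and the evaluation of `F_n` at
`y_1 = ⋯ = y_d = 1` (i.e. the sum of the coefficients of the F-polynomial) equals the
continuant `N[a_1,…,a_n]`, a positive integer. -/
theorem F_eval_at_ones_eq_continuant
    (n : ℕ) (hn : 1 ≤ n) (a : ℕ → ℕ)
    (hpos : ∀ i, 1 ≤ i → i ≤ n → 0 < a i) (ha1 : 1 < a 1) :
    (∀ m, 1 ≤ m → m ≤ n → F a m ∈ (algebraMap (MvPolynomial ℕ ℚ) Kf).range) ∧
    (0 < contN a n) ∧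
    (∃ p : MvPolynomial ℕ ℚ,
      algebraMap (MvPolynomial ℕ ℚ) Kf p = F a n ∧
      MvPolynomial.eval (fun _ => (1 : ℚ)) p = ((contN a n : ℕ) : ℚ)) := by
  refine ⟨fun m _ _ => ⟨Pp a m, map_Pp a m⟩, contN_pos a n hpos n le_rfl,
    Pp a n, map_Pp a n, eval_Pp a n hpos n le_rfl⟩
end
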